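/- arXiv:2104.08300 — 2 statements merged into one kernel-verified Lean document; each statement's English description precedes it below -/
import Mathlib

section
/- Under consistency, positivity, and the tilting assumptions at both levels t = 0 and t = 1, the average causal effect ACE := E[Y(1)] − E[Y(0)] is identified as ACE = E[ μ_1(Y;X)·π_1(X) + ( μ_1(Y e^{γ_1 s_1(Y)};X)/μ_1(e^{γ_1 s_1(Y)};X) )·π_0(X) ] − E[ μ_0(Y;X)·π_0(X) + ( μ_0(Y e^{γ_0 s_0(Y)};X)/μ_0(e^{γ_0 s_0(Y)};X) )·π_1(X) ]. -/
/-!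
For each level `t`, split `E[Y(t)] = E[E[Y(t) 1{T=t} | X]] + E[E[Y(t) 1{T=1-t} | X]]`.
By consistency the first summand only involves the observed `Y`. The tilting assumption with
`g = id` expresses the unobserved second summand through observed tilted moments,
`E[Y(t) 1{T=1-t} | X] = E[Y(t) e^{γ s} 1{T=t} | X] / E[e^{γ s} 1{T=t} | X] · π_{1-t}(X)`,
and in the ratio `μ_t(Y e^{γ s}; X) / μ_t(e^{γ s}; X)` the factors `π_t(X)` cancel.
-/

open MeasureTheory Real

section Tilting

variable {Ω : Type*} {m m0 : MeasurableSpace Ω} {P : Measure[m0] Ω}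

theorem MeasureTheory.Integrable.mul_ite_eq {Z T : Ω → ℝ} (hZ : Integrable Z P) (hT : Measurable T)
    (c : ℝ) : Integrable (fun ω => Z ω * if T ω = c then (1 : ℝ) else 0) P :=
  hZ.mul_bdd (c := 1)
    (measurable_const.ite (hT (measurableSet_singleton c)) measurable_const).aestronglyMeasurable
    (ae_of_all _ fun ω => by split_ifs <;> simp)

theorem condExp_mul_add_condExp_mul_ae_eq {Z I J : Ω → ℝ}
    (hZI : Integrable (fun ω => Z ω * I ω) P) (hZJ : Integrable (fun ω => Z ω * J ω) P)
    (hIJ : ∀ᵐ ω ∂P, I ω + J ω = 1) :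
    (fun ω => P[fun ω => Z ω * I ω | m] ω + P[fun ω => Z ω * J ω | m] ω) =ᵐ[P] P[Z | m] := by
  have hsum : (fun ω => Z ω * I ω + Z ω * J ω) =ᵐ[P] Z := by
    filter_upwards [hIJ] with ω h
    rw [← mul_add, h, mul_one]
  exact (condExp_add hZI hZJ m).symm.trans (condExp_congr_ae hsum)

theorem condExp_comp_mul_ite_congr {T Y Z : Ω → ℝ} {c : ℝ}
    (hYZ : ∀ᵐ ω ∂P, T ω = c → Y ω = Z ω) (f : ℝ → ℝ) :
    P[fun ω => f (Y ω) * (if T ω = c then (1 : ℝ) else 0) | m] =ᵐ[P]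
      P[fun ω => f (Z ω) * (if T ω = c then (1 : ℝ) else 0) | m] := by
  refine condExp_congr_ae ?_
  filter_upwards [hYZ] with ω h
  split_ifs with hT
  · rw [h hT]
  · rw [mul_zero, mul_zero]

theorem integral_eq_of_tilting [IsFiniteMeasure P] (hm : m ≤ m0)
    {T Y Z μY μE μYE pr pr' : Ω → ℝ} {φ : ℝ → ℝ} {c c' : ℝ}
    (hT : Measurable T) (hTval : ∀ ω, T ω = c ∨ T ω = c') (hcc' : c ≠ c')
    (hcons : ∀ᵐ ω ∂P, T ω = c → Y ω = Z ω) (hZ : Integrable Z P)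
    (hpr : ∀ᵐ ω ∂P, pr ω ≠ 0) (hpr' : pr' =ᵐ[P] P[fun ω => if T ω = c' then (1 : ℝ) else 0 | m])
    (hφ : ∀ᵐ ω ∂P, P[fun ω => φ (Z ω) * (if T ω = c then (1 : ℝ) else 0) | m] ω ≠ 0)
    (htilt : ∀ᵐ ω ∂P,
      P[fun ω => Z ω * (if T ω = c' then (1 : ℝ) else 0) | m] ω *
        P[fun ω => φ (Z ω) * (if T ω = c then (1 : ℝ) else 0) | m] ω =
      P[fun ω => Z ω * φ (Z ω) * (if T ω = c then (1 : ℝ) else 0) | m] ω *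
        P[fun ω => if T ω = c' then (1 : ℝ) else 0 | m] ω)
    (hμY : μY =ᵐ[P] fun ω => P[fun ω => Y ω * (if T ω = c then (1 : ℝ) else 0) | m] ω / pr ω)
    (hμE : μE =ᵐ[P] fun ω => P[fun ω => φ (Y ω) * (if T ω = c then (1 : ℝ) else 0) | m] ω / pr ω)
    (hμYE : μYE =ᵐ[P] fun ω =>
      P[fun ω => Y ω * φ (Y ω) * (if T ω = c then (1 : ℝ) else 0) | m] ω / pr ω) :
    ∫ ω, (μY ω * pr ω + μYE ω / μE ω * pr' ω) ∂P = ∫ ω, Z ω ∂P := by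
  have hIJ : ∀ ω, (if T ω = c then (1 : ℝ) else 0) + (if T ω = c' then (1 : ℝ) else 0) = 1 := by
    intro ω
    rcases hTval ω with h | h <;> simp [h, hcc', hcc'.symm]
  have hY := condExp_comp_mul_ite_congr (m := m) hcons fun y => y
  have hE := condExp_comp_mul_ite_congr (m := m) hcons φ
  have hYE := condExp_comp_mul_ite_congr (m := m) hcons fun y => y * φ y
  have hobserved : (fun ω => μY ω * pr ω) =ᵐ[P]
      P[fun ω => Z ω * (if T ω = c then (1 : ℝ) else 0) | m] := by
    filter_upwards [hpr, hμY, hY] with ω hprω hμYω hYω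
    rw [hμYω, hYω, div_mul_cancel₀ _ hprω]
  have hcounterfactual : (fun ω => μYE ω / μE ω * pr' ω) =ᵐ[P]
      P[fun ω => Z ω * (if T ω = c' then (1 : ℝ) else 0) | m] := by
    filter_upwards [hpr, hpr', hφ, htilt, hμE, hμYE, hE, hYE]
      with ω hprω hpr'ω hφω htiltω hμEω hμYEω hEω hYEω
    rw [hμEω, hμYEω, hEω, hYEω, div_div_div_cancel_right₀ hprω, hpr'ω, div_mul_eq_mul_div,
      div_eq_iff hφω, htiltω]
  calc ∫ ω, (μY ω * pr ω + μYE ω / μE ω * pr' ω) ∂P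
      = ∫ ω, P[Z | m] ω ∂P :=
        integral_congr_ae <| (hobserved.add hcounterfactual).trans <|
          condExp_mul_add_condExp_mul_ae_eq (hZ.mul_ite_eq hT c) (hZ.mul_ite_eq hT c')
            (ae_of_all _ hIJ)
    _ = ∫ ω, Z ω ∂P := integral_condExp hm

end Tilting

theorem sensitivity_identification_ACE_general
    {Ω : Type*} [MeasurableSpace Ω] (P : Measure Ω) [IsProbabilityMeasure P]
    {p : ℕ} (X : Ω → (Fin p → ℝ)) (T : Ω → ℝ) (Y : Ω → ℝ)
    -- potential outcomes `Yp 0 = Y(0)`, `Yp 1 = Y(1)`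
    (Yp : Fin 2 → Ω → ℝ)
    (hX : Measurable X) (hT : Measurable T)
    (hTval : ∀ ω, T ω = 0 ∨ T ω = 1)
    -- consistency : `Y = Y(T)`
    (hcons : ∀ᵐ ω ∂P, Y ω = if T ω = 1 then Yp 1 ω else Yp 0 ω)
    -- tilting functions and sensitivity parameters at each level
    (s : Fin 2 → ℝ → ℝ) (γ : Fin 2 → ℝ)
    -- versions of the conditional treatment probabilities given `σ(X)`
    (pr : Fin 2 → (Fin p → ℝ) → ℝ)
    (hprv : ∀ t : Fin 2, (fun ω => pr t (X ω)) =ᵐ[P]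
      P[(fun ω => if T ω = ((t : ℕ) : ℝ) then (1 : ℝ) else 0) |
        MeasurableSpace.comap X inferInstance])
    -- positivity
    (ε : ℝ) (hε : 0 < ε)
    (hpos : ∀ t : Fin 2, ∀ᵐ ω ∂P, ε ≤ pr t (X ω) ∧ pr t (X ω) ≤ 1 - ε)
    -- integrability assumptions
    (hYpInt : ∀ t : Fin 2, Integrable (Yp t) P)
    -- the tilted conditional expectations are a.s. positive
    (hCpos : ∀ t : Fin 2, ∀ᵐ ω ∂P, 0 <
      (P[(fun ω => Real.exp (γ t * s t (Yp t ω)) * (if T ω = ((t : ℕ) : ℝ) then (1 : ℝ) else 0)) |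
        MeasurableSpace.comap X inferInstance]) ω)
    -- tilting assumption at each level (for every bounded measurable `g`, and for `g = id`)
    (htilt : ∀ t : Fin 2, ∀ g : ℝ → ℝ, Measurable g → ((∃ C, ∀ y, |g y| ≤ C) ∨ g = id) →
      ∀ᵐ ω ∂P,
        (P[(fun ω => g (Yp t ω) * (if T ω = (((1 - t : Fin 2) : ℕ) : ℝ) then (1 : ℝ) else 0)) |
          MeasurableSpace.comap X inferInstance]) ω *
        (P[(fun ω => Real.exp (γ t * s t (Yp t ω)) *
            (if T ω = ((t : ℕ) : ℝ) then (1 : ℝ) else 0)) |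
          MeasurableSpace.comap X inferInstance]) ω =
        (P[(fun ω => g (Yp t ω) * Real.exp (γ t * s t (Yp t ω)) *
            (if T ω = ((t : ℕ) : ℝ) then (1 : ℝ) else 0)) |
          MeasurableSpace.comap X inferInstance]) ω *
        (P[(fun ω => if T ω = (((1 - t : Fin 2) : ℕ) : ℝ) then (1 : ℝ) else 0) |
          MeasurableSpace.comap X inferInstance]) ω)
    -- versions of the conditional means `μ_t(g(Y); X) = E[g(Y)1{T=t}|σ(X)]/π_t(X)`
    (muY muE muYE : Fin 2 → (Fin p → ℝ) → ℝ)
    (hmuY : ∀ t : Fin 2, (fun ω => muY t (X ω)) =ᵐ[P] fun ω =>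
      (P[(fun ω => Y ω * (if T ω = ((t : ℕ) : ℝ) then (1 : ℝ) else 0)) |
        MeasurableSpace.comap X inferInstance]) ω / pr t (X ω))
    (hmuE : ∀ t : Fin 2, (fun ω => muE t (X ω)) =ᵐ[P] fun ω =>
      (P[(fun ω => Real.exp (γ t * s t (Y ω)) * (if T ω = ((t : ℕ) : ℝ) then (1 : ℝ) else 0)) |
        MeasurableSpace.comap X inferInstance]) ω / pr t (X ω))
    (hmuYE : ∀ t : Fin 2, (fun ω => muYE t (X ω)) =ᵐ[P] fun ω =>
      (P[(fun ω => Y ω * Real.exp (γ t * s t (Y ω)) *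
          (if T ω = ((t : ℕ) : ℝ) then (1 : ℝ) else 0)) |
        MeasurableSpace.comap X inferInstance]) ω / pr t (X ω)) :
    (∫ ω, Yp 1 ω ∂P) - (∫ ω, Yp 0 ω ∂P) =
      (∫ ω, (muY 1 (X ω) * pr 1 (X ω) + (muYE 1 (X ω) / muE 1 (X ω)) * pr 0 (X ω)) ∂P) -
      (∫ ω, (muY 0 (X ω) * pr 0 (X ω) + (muYE 0 (X ω) / muE 0 (X ω)) * pr 1 (X ω)) ∂P) := by
  have level : ∀ t : Fin 2, ∫ ω, (muY t (X ω) * pr t (X ω) +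
      muYE t (X ω) / muE t (X ω) * pr (1 - t) (X ω)) ∂P = ∫ ω, Yp t ω ∂P := by
    intro t
    have htilt_id := htilt t id measurable_id (Or.inr rfl)
    simp only [id_eq] at htilt_id
    refine integral_eq_of_tilting (φ := fun y => exp (γ t * s t y)) hX.comap_le hT ?_ ?_ ?_
      (hYpInt t) ?_ (hprv (1 - t)) ((hCpos t).mono fun _ h => h.ne') htilt_id
      (hmuY t) (hmuE t) (hmuYE t)
    · intro ω
      fin_cases t <;> simp [hTval ω, or_comm]
    · fin_cases t <;> simp
    · filter_upwards [hcons] with ω hω hTt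
      fin_cases t <;> simp_all
    · filter_upwards [hpos t] with ω h using (hε.trans_le h.1).ne'
  rw [← level 1, ← level 0]
  rfl

/-- Under consistency, positivity, and the tilting assumptions at both levels
`t = 0` and `t = 1`, the average causal effect `ACE := E[Y(1)] − E[Y(0)]` is identified as
`ACE = E[μ₁(Y;X)pr₁(X) + (μ₁(Y e^{γ₁s₁(Y)};X)/μ₁(e^{γ₁s₁(Y)};X))pr₀(X)]
     − E[μ₀(Y;X)pr₀(X) + (μ₀(Y e^{γ₀s₀(Y)};X)/μ₀(e^{γ₀s₀(Y)};X))pr₁(X)]`. -/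
theorem sensitivity_identification_ACE
    {Ω : Type*} [MeasurableSpace Ω] (P : Measure Ω) [IsProbabilityMeasure P]
    {p : ℕ} (X : Ω → (Fin p → ℝ)) (T : Ω → ℝ) (Y : Ω → ℝ)
    -- potential outcomes `Yp 0 = Y(0)`, `Yp 1 = Y(1)`
    (Yp : Fin 2 → Ω → ℝ)
    (hX : Measurable X) (hT : Measurable T) (hY : Measurable Y)
    (hYp : ∀ t : Fin 2, Measurable (Yp t))
    (hTval : ∀ ω, T ω = 0 ∨ T ω = 1)
    -- consistency : `Y = Y(T)`
    (hcons : ∀ᵐ ω ∂P, Y ω = if T ω = 1 then Yp 1 ω else Yp 0 ω)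
    -- tilting functions and sensitivity parameters at each level
    (s : Fin 2 → ℝ → ℝ) (hs : ∀ t, Measurable (s t)) (γ : Fin 2 → ℝ)
    -- versions of the conditional treatment probabilities given `σ(X)`
    (pr : Fin 2 → (Fin p → ℝ) → ℝ) (hpr : ∀ t, Measurable (pr t))
    (hprv : ∀ t : Fin 2, (fun ω => pr t (X ω)) =ᵐ[P]
      P[(fun ω => if T ω = ((t : ℕ) : ℝ) then (1 : ℝ) else 0) |
        MeasurableSpace.comap X inferInstance])
    -- positivity
    (ε : ℝ) (hε : 0 < ε)
    (hpos : ∀ t : Fin 2, ∀ᵐ ω ∂P, ε ≤ pr t (X ω) ∧ pr t (X ω) ≤ 1 - ε)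
    -- integrability assumptions
    (hYpInt : ∀ t : Fin 2, Integrable (Yp t) P)
    (hExpInt : ∀ t : Fin 2, Integrable (fun ω => Real.exp (γ t * s t (Yp t ω))) P)
    (hYpExpInt : ∀ t : Fin 2, Integrable (fun ω => Yp t ω * Real.exp (γ t * s t (Yp t ω))) P)
    -- the tilted conditional expectations are a.s. positive
    (hCpos : ∀ t : Fin 2, ∀ᵐ ω ∂P, 0 <
      (P[(fun ω => Real.exp (γ t * s t (Yp t ω)) * (if T ω = ((t : ℕ) : ℝ) then (1 : ℝ) else 0)) |
        MeasurableSpace.comap X inferInstance]) ω)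
    -- tilting assumption at each level (for every bounded measurable `g`, and for `g = id`)
    (htilt : ∀ t : Fin 2, ∀ g : ℝ → ℝ, Measurable g → ((∃ C, ∀ y, |g y| ≤ C) ∨ g = id) →
      ∀ᵐ ω ∂P,
        (P[(fun ω => g (Yp t ω) * (if T ω = (((1 - t : Fin 2) : ℕ) : ℝ) then (1 : ℝ) else 0)) |
          MeasurableSpace.comap X inferInstance]) ω *
        (P[(fun ω => Real.exp (γ t * s t (Yp t ω)) *
            (if T ω = ((t : ℕ) : ℝ) then (1 : ℝ) else 0)) |
          MeasurableSpace.comap X inferInstance]) ω =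
        (P[(fun ω => g (Yp t ω) * Real.exp (γ t * s t (Yp t ω)) *
            (if T ω = ((t : ℕ) : ℝ) then (1 : ℝ) else 0)) |
          MeasurableSpace.comap X inferInstance]) ω *
        (P[(fun ω => if T ω = (((1 - t : Fin 2) : ℕ) : ℝ) then (1 : ℝ) else 0) |
          MeasurableSpace.comap X inferInstance]) ω)
    -- versions of the conditional means `μ_t(g(Y); X) = E[g(Y)1{T=t}|σ(X)]/π_t(X)`
    (muY muE muYE : Fin 2 → (Fin p → ℝ) → ℝ)
    (hmuY : ∀ t : Fin 2, (fun ω => muY t (X ω)) =ᵐ[P] fun ω =>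
      (P[(fun ω => Y ω * (if T ω = ((t : ℕ) : ℝ) then (1 : ℝ) else 0)) |
        MeasurableSpace.comap X inferInstance]) ω / pr t (X ω))
    (hmuE : ∀ t : Fin 2, (fun ω => muE t (X ω)) =ᵐ[P] fun ω =>
      (P[(fun ω => Real.exp (γ t * s t (Y ω)) * (if T ω = ((t : ℕ) : ℝ) then (1 : ℝ) else 0)) |
        MeasurableSpace.comap X inferInstance]) ω / pr t (X ω))
    (hmuYE : ∀ t : Fin 2, (fun ω => muYE t (X ω)) =ᵐ[P] fun ω =>
      (P[(fun ω => Y ω * Real.exp (γ t * s t (Y ω)) *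
          (if T ω = ((t : ℕ) : ℝ) then (1 : ℝ) else 0)) |
        MeasurableSpace.comap X inferInstance]) ω / pr t (X ω)) :
    (∫ ω, Yp 1 ω ∂P) - (∫ ω, Yp 0 ω ∂P) =
      (∫ ω, (muY 1 (X ω) * pr 1 (X ω) + (muYE 1 (X ω) / muE 1 (X ω)) * pr 0 (X ω)) ∂P) -
      (∫ ω, (muY 0 (X ω) * pr 0 (X ω) + (muYE 0 (X ω) / muE 0 (X ω)) * pr 1 (X ω)) ∂P) :=
  sensitivity_identification_ACE_general P X T Y Yp hX hT hTval hcons s γ pr hprv ε hε hpos hYpInt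
    hCpos htilt muY muE muYE hmuY hmuE hmuYE
end

section
/- Second-order remainder bound: there exist constants C₁, C₂, C₃, C₄ depending only on ε and M such that | E[ν̃(X,T,Y)] − ψ_t(P) | ≤ C₁‖m̃₁−μ₁‖‖m̃_Y−μ_Y‖ + C₂‖m̃₁−μ₁‖‖π̃_t−π_t‖ + C₃‖m̃_Y−μ_Y‖‖π̃_t−π_t‖ + C₄‖m̃₁−μ₁‖², where ‖f‖ := ( E[f(X)²] )^{1/2} is the L²(P) norm of a function of X. -/
/-!
Condition on `σ(X)`: the estimated nuisances are `σ(X)`-measurable and bounded, so they pull out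
of the conditional expectation, and with `π_{1-t} = 1 - π_t` one gets `E[ν̃] - ψ_t(P) = E[R]` for
a rational function `R` of the true and estimated nuisances. Writing `Δ₁ = m̃₁ - μ₁`,
`Δ_Y = m̃_Y - μ_Y`, `Δ_π = π̃_t - π_t`, it factors as
`R = (μ_Y Δ₁ - μ₁ Δ_Y) (π_t (π̃_t - 1) Δ₁ - m̃₁ Δ_π) / (π̃_t m̃₁² μ₁)`,
a product of two first-order errors. Positivity and boundedness then give
`|R| ≤ C (|Δ₁ Δ_Y| + |Δ₁ Δ_π| + |Δ_Y Δ_π| + Δ₁²)`, and Cauchy–Schwarz finishes.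
-/

open MeasureTheory Real Set

universe u

/-- `E[ν̃ | X]` minus the integrand of `ψ_t`, at true nuisance values `p = π_t`, `m₁ = μ₁`,
`mY = μ_Y` and estimates `p' = π̃_t`, `m₁' = m̃₁`, `mY' = m̃_Y`, with `π_{1-t} = 1 - π_t`. -/
noncomputable def secondOrderRemainder (p p' m₁ m₁' mY mY' : ℝ) : ℝ :=
  (1 - p') / (p' * m₁') * (mY * p) - (1 - p') * mY' / (p' * m₁' ^ 2) * (m₁ * p)
    + (mY' / m₁' - mY / m₁) * (1 - p)

theorem secondOrderRemainder_eq_mul_div {p p' m₁ m₁' mY mY' : ℝ} (hp' : p' ≠ 0) (hm₁' : m₁' ≠ 0)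
    (hm₁ : m₁ ≠ 0) :
    secondOrderRemainder p p' m₁ m₁' mY mY' =
      (mY * (m₁' - m₁) - m₁ * (mY' - mY)) * (p * (p' - 1) * (m₁' - m₁) - m₁' * (p' - p))
        / (p' * m₁' ^ 2 * m₁) := by
  unfold secondOrderRemainder
  field_simp
  ring

theorem abs_secondOrderRemainder_le {ε M p p' m₁ m₁' mY mY' : ℝ} (hε : 0 < ε)
    (hp : p ∈ Icc 0 1) (hp' : p' ∈ Icc ε 1) (hm₁ : m₁ ∈ Icc ε M) (hm₁' : m₁' ∈ Icc ε M)
    (hmY : |mY| ≤ M) :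
    |secondOrderRemainder p p' m₁ m₁' mY mY'|
      ≤ M / ε ^ 4 * |(m₁' - m₁) * (mY' - mY)| + M ^ 2 / ε ^ 4 * |(m₁' - m₁) * (p' - p)|
        + M ^ 2 / ε ^ 4 * |(mY' - mY) * (p' - p)| + M / ε ^ 4 * (m₁' - m₁) ^ 2 := by
  obtain ⟨hp0, hp1⟩ := hp
  obtain ⟨hp'ε, hp'1⟩ := hp'
  obtain ⟨hm₁ε, hm₁M⟩ := hm₁
  obtain ⟨hm₁'ε, hm₁'M⟩ := hm₁'
  have hM : 0 ≤ M := hε.le.trans (hm₁ε.trans hm₁M)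
  have hp'0 : 0 < p' := hε.trans_le hp'ε
  have hm₁0 : 0 < m₁ := hε.trans_le hm₁ε
  have hm₁'0 : 0 < m₁' := hε.trans_le hm₁'ε
  have hden : ε ^ 4 ≤ p' * m₁' ^ 2 * m₁ := by
    rw [show ε ^ 4 = ε * ε ^ 2 * ε by ring]
    gcongr
  have hfirst : |mY * (m₁' - m₁) - m₁ * (mY' - mY)| ≤ M * |m₁' - m₁| + M * |mY' - mY| := by
    rw [← abs_of_pos hm₁0] at hm₁M
    calc _ ≤ |mY| * |m₁' - m₁| + |m₁| * |mY' - mY| := by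
          rw [← abs_mul, ← abs_mul]; exact abs_sub _ _
      _ ≤ _ := by gcongr
  have hsecond :
      |p * (p' - 1) * (m₁' - m₁) - m₁' * (p' - p)| ≤ |m₁' - m₁| + M * |p' - p| := by
    have hpw : |p * (p' - 1)| ≤ 1 := by
      rw [abs_le]; constructor <;> nlinarith
    rw [← abs_of_pos hm₁'0] at hm₁'M
    calc _ ≤ |p * (p' - 1)| * |m₁' - m₁| + |m₁'| * |p' - p| := by
          rw [← abs_mul, ← abs_mul]; exact abs_sub _ _
      _ ≤ 1 * |m₁' - m₁| + M * |p' - p| := by gcongr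
      _ = _ := by rw [one_mul]
  rw [secondOrderRemainder_eq_mul_div hp'0.ne' hm₁'0.ne' hm₁0.ne', abs_div,
    abs_of_pos (by positivity : 0 < p' * m₁' ^ 2 * m₁), abs_mul]
  calc _ ≤ (M * |m₁' - m₁| + M * |mY' - mY|) * (|m₁' - m₁| + M * |p' - p|) / ε ^ 4 := by
        gcongr
    _ = _ := by
        rw [← sq_abs (m₁' - m₁)]
        simp only [abs_mul]
        ring

theorem abs_div_le_div_of_le {x y a b : ℝ} (hb : 0 < b) (hx : |x| ≤ a) (hy : b ≤ y) :
    |x / y| ≤ a / b := by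
  rw [abs_div, abs_of_pos (hb.trans_le hy)]
  exact div_le_div₀ ((abs_nonneg x).trans hx) hx hb hy

theorem abs_influence_weights_le {ε M p m₁ mY : ℝ} (hε : 0 < ε) (hp : p ∈ Icc ε 1)
    (hm₁ : m₁ ∈ Icc ε M) (hmY : |mY| ≤ M) :
    |(1 - p) / (p * m₁)| ≤ 1 / ε ^ 2 ∧ |(1 - p) * mY / (p * m₁ ^ 2)| ≤ M / ε ^ 3
      ∧ |mY / m₁| ≤ M / ε := by
  obtain ⟨hpε, hp1⟩ := hp
  have h1p : |1 - p| ≤ 1 := by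
    rw [abs_le]; constructor <;> linarith
  refine ⟨abs_div_le_div_of_le (by positivity) h1p ?_,
    abs_div_le_div_of_le (by positivity) ?_ ?_, abs_div_le_div_of_le hε hmY hm₁.1⟩
  · rw [sq]; exact mul_le_mul hpε hm₁.1 hε.le (hε.le.trans hpε)
  · rw [abs_mul, ← one_mul M]; exact mul_le_mul h1p hmY (abs_nonneg _) zero_le_one
  · rw [pow_succ']
    exact mul_le_mul hpε (pow_le_pow_left₀ hε.le hm₁.1 2) (by positivity) (hε.le.trans hpε)

theorem ite_eq_one_sub_eq_one_sub_ite {x t : ℝ} (hx : x = 0 ∨ x = 1) (ht : t = 0 ∨ t = 1) :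
    (if x = 1 - t then (1 : ℝ) else 0) = 1 - if x = t then 1 else 0 := by
  rcases hx with rfl | rfl <;> rcases ht with rfl | rfl <;> norm_num

section CauchySchwarz

variable {α : Type*} {mα : MeasurableSpace α} {μ : Measure α}

theorem integral_abs_mul_le_sqrt_mul_sqrt {f g : α → ℝ} (hf : MemLp f 2 μ) (hg : MemLp g 2 μ) :
    ∫ a, |f a * g a| ∂μ ≤ √(∫ a, f a ^ 2 ∂μ) * √(∫ a, g a ^ 2 ∂μ) := by
  have h := integral_mul_norm_le_Lp_mul_Lq (μ := μ) Real.HolderConjugate.two_two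
    (by simpa using hf) (by simpa using hg)
  rw [sqrt_eq_rpow, sqrt_eq_rpow]
  simpa only [Real.norm_eq_abs, ← abs_mul, Real.rpow_two, sq_abs] using h

theorem abs_integral_le_of_ae_abs_le_quadratic {F u v w : α → ℝ} {C₁ C₂ C₃ C₄ : ℝ}
    (hu : MemLp u 2 μ) (hv : MemLp v 2 μ) (hw : MemLp w 2 μ)
    (hC₁ : 0 ≤ C₁) (hC₂ : 0 ≤ C₂) (hC₃ : 0 ≤ C₃)
    (hF : ∀ᵐ a ∂μ, |F a| ≤ C₁ * |u a * v a| + C₂ * |u a * w a| + C₃ * |v a * w a| + C₄ * u a ^ 2) :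
    |∫ a, F a ∂μ| ≤ C₁ * (√(∫ a, u a ^ 2 ∂μ) * √(∫ a, v a ^ 2 ∂μ))
      + C₂ * (√(∫ a, u a ^ 2 ∂μ) * √(∫ a, w a ^ 2 ∂μ))
      + C₃ * (√(∫ a, v a ^ 2 ∂μ) * √(∫ a, w a ^ 2 ∂μ)) + C₄ * √(∫ a, u a ^ 2 ∂μ) ^ 2 := by
  have huv := (hu.integrable_mul hv).abs
  have huw := (hu.integrable_mul hw).abs
  have hvw := (hv.integrable_mul hw).abs
  have huu : Integrable (fun a => u a ^ 2) μ := hu.integrable_sq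
  calc |∫ a, F a ∂μ|
      ≤ ∫ a, (C₁ * |u a * v a| + C₂ * |u a * w a| + C₃ * |v a * w a| + C₄ * u a ^ 2) ∂μ := by
        refine abs_integral_le_integral_abs.trans
          (integral_mono_of_nonneg (ae_of_all _ fun a => abs_nonneg (F a)) ?_ hF)
        exact (((huv.const_mul C₁).add (huw.const_mul C₂)).add (hvw.const_mul C₃)).add
          (huu.const_mul C₄)
    _ = C₁ * ∫ a, |u a * v a| ∂μ + C₂ * ∫ a, |u a * w a| ∂μ + C₃ * ∫ a, |v a * w a| ∂μ
          + C₄ * ∫ a, u a ^ 2 ∂μ := by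
        rw [integral_add, integral_add, integral_add, integral_const_mul, integral_const_mul,
          integral_const_mul, integral_const_mul]
        all_goals fun_prop
    _ ≤ _ := by
        rw [sq_sqrt (integral_nonneg fun a => sq_nonneg (u a))]
        gcongr
        · exact integral_abs_mul_le_sqrt_mul_sqrt hu hv
        · exact integral_abs_mul_le_sqrt_mul_sqrt hu hw
        · exact integral_abs_mul_le_sqrt_mul_sqrt hv hw

end CauchySchwarz

/-- `ν̃` at one observation: `a = 1{T=t}`, `b = 1{T=1-t}`, `e = exp(γ s(y))`, and `p, m₁, mY` the
values of the estimates `π̃_t, m̃₁, m̃_Y`. -/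
noncomputable def uncenteredInfluence (a b y e p m₁ mY : ℝ) : ℝ :=
  a * (y + y * e * (1 - p) / (p * m₁) - e * (1 - p) * mY / (p * m₁ ^ 2)) + b * (mY / m₁)

section ConditionalExpectation

variable {Ω : Type*} {m m₀ : MeasurableSpace Ω} {μ : Measure Ω} [IsFiniteMeasure μ]

theorem condExp_one_sub (hm : m ≤ m₀) {f : Ω → ℝ} (hf : Integrable f μ) :
    μ[fun ω => 1 - f ω | m] =ᵐ[μ] fun ω => 1 - μ[f | m] ω := by
  have h := condExp_sub (integrable_const (1 : ℝ)) hf m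
  rwa [condExp_const hm] at h

theorem condExp_uncenteredInfluence_sub_ae_eq_secondOrderRemainder (hm : m ≤ m₀) {ε M : ℝ}
    (hε : 0 < ε) {A B Y E p ps μ₀ m₁ mY p' m₁' mY' : Ω → ℝ}
    (hYA : Integrable (fun ω => Y ω * A ω) μ) (hEA : Integrable (fun ω => E ω * A ω) μ)
    (hYEA : Integrable (fun ω => Y ω * E ω * A ω) μ) (hB : Integrable B μ)
    (hp_ne : ∀ᵐ ω ∂μ, p ω ≠ 0) (hps : μ[B | m] =ᵐ[μ] ps) (hps_eq : ps =ᵐ[μ] fun ω => 1 - p ω)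
    (h₀ : μ₀ =ᵐ[μ] fun ω => μ[fun ω => Y ω * A ω | m] ω / p ω)
    (h₁ : m₁ =ᵐ[μ] fun ω => μ[fun ω => E ω * A ω | m] ω / p ω)
    (hY : mY =ᵐ[μ] fun ω => μ[fun ω => Y ω * E ω * A ω | m] ω / p ω)
    (hp' : Measurable[m] p') (hm₁' : Measurable[m] m₁') (hmY' : Measurable[m] mY')
    (hp'_mem : ∀ ω, p' ω ∈ Icc ε 1) (hm₁'_mem : ∀ ω, m₁' ω ∈ Icc ε M)
    (hmY'_le : ∀ ω, |mY' ω| ≤ M) :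
    (fun ω =>
        μ[fun ω => uncenteredInfluence (A ω) (B ω) (Y ω) (E ω) (p' ω) (m₁' ω) (mY' ω) | m] ω
          - (μ₀ ω * p ω + mY ω / m₁ ω * ps ω))
      =ᵐ[μ] fun ω => secondOrderRemainder (p ω) (p' ω) (m₁ ω) (m₁' ω) (mY ω) (mY' ω) := by
  set w₁ : Ω → ℝ := fun ω => (1 - p' ω) / (p' ω * m₁' ω)
  set w₂ : Ω → ℝ := fun ω => (1 - p' ω) * mY' ω / (p' ω * m₁' ω ^ 2)
  set w₃ : Ω → ℝ := fun ω => mY' ω / m₁' ω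
  have hw₁ : StronglyMeasurable[m] w₁ := by fun_prop
  have hw₂ : StronglyMeasurable[m] w₂ := by fun_prop
  have hw₃ : StronglyMeasurable[m] w₃ := by fun_prop
  have hw_le (ω : Ω) := abs_influence_weights_le hε (hp'_mem ω) (hm₁'_mem ω) (hmY'_le ω)
  have hw₁_le : ∀ᵐ ω ∂μ, ‖w₁ ω‖ ≤ 1 / ε ^ 2 := ae_of_all _ fun ω => (hw_le ω).1
  have hw₂_le : ∀ᵐ ω ∂μ, ‖w₂ ω‖ ≤ M / ε ^ 3 := ae_of_all _ fun ω => (hw_le ω).2.1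
  have hw₃_le : ∀ᵐ ω ∂μ, ‖w₃ ω‖ ≤ M / ε := ae_of_all _ fun ω => (hw_le ω).2.2
  have hw₁f : Integrable (w₁ * fun ω => Y ω * E ω * A ω) μ :=
    hYEA.bdd_mul (hw₁.mono hm).aestronglyMeasurable hw₁_le
  have hw₂f : Integrable (w₂ * fun ω => E ω * A ω) μ :=
    hEA.bdd_mul (hw₂.mono hm).aestronglyMeasurable hw₂_le
  have hw₃f : Integrable (w₃ * B) μ := hB.bdd_mul (hw₃.mono hm).aestronglyMeasurable hw₃_le
  have hsplit :
      (fun ω => uncenteredInfluence (A ω) (B ω) (Y ω) (E ω) (p' ω) (m₁' ω) (mY' ω)) =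
        (fun ω => Y ω * A ω) + w₁ * (fun ω => Y ω * E ω * A ω) - w₂ * (fun ω => E ω * A ω)
          + w₃ * B := by
    ext ω
    simp only [uncenteredInfluence, w₁, w₂, w₃, Pi.add_apply, Pi.sub_apply, Pi.mul_apply]
    ring
  rw [hsplit]
  filter_upwards [condExp_add ((hYA.add hw₁f).sub hw₂f) hw₃f m,
    condExp_sub (hYA.add hw₁f) hw₂f m, condExp_add hYA hw₁f m,
    condExp_stronglyMeasurable_mul_of_bound hm hw₁ hYEA _ hw₁_le,
    condExp_stronglyMeasurable_mul_of_bound hm hw₂ hEA _ hw₂_le,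
    condExp_stronglyMeasurable_mul_of_bound hm hw₃ hB _ hw₃_le,
    hp_ne, hps, hps_eq, h₀, h₁, hY]
    with ω hadd₃ hsub₂ hadd₁ hpull₁ hpull₂ hpull₃ hpω hpsω hps_eqω h₀ω h₁ω hYω
  rw [eq_div_iff hpω] at h₀ω h₁ω hYω
  simp only [Pi.add_apply, Pi.sub_apply, Pi.mul_apply] at hadd₃ hsub₂ hadd₁ hpull₁ hpull₂ hpull₃ ⊢
  rw [hadd₃, hsub₂, hadd₁, hpull₁, hpull₂, hpull₃, ← h₀ω, ← h₁ω, ← hYω, hpsω, hps_eqω,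
    secondOrderRemainder]
  ring

theorem integral_uncenteredInfluence_sub_eq_integral_secondOrderRemainder (hm : m ≤ m₀)
    {ε M : ℝ} (hε : 0 < ε) (hM : 0 ≤ M) {A B Y E p ps μ₀ m₁ mY p' m₁' mY' : Ω → ℝ}
    (hA : AEStronglyMeasurable A μ) (hA_le : ∀ ω, |A ω| ≤ 1) (hBA : ∀ ω, B ω = 1 - A ω)
    (hY_int : Integrable Y μ) (hE_int : Integrable E μ)
    (hYE_int : Integrable (fun ω => Y ω * E ω) μ)
    (hp : p =ᵐ[μ] μ[A | m]) (hps : ps =ᵐ[μ] μ[B | m]) (hp_mem : ∀ᵐ ω ∂μ, p ω ∈ Icc ε 1)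
    (h₀ : μ₀ =ᵐ[μ] fun ω => μ[fun ω => Y ω * A ω | m] ω / p ω)
    (h₁ : m₁ =ᵐ[μ] fun ω => μ[fun ω => E ω * A ω | m] ω / p ω)
    (hY : mY =ᵐ[μ] fun ω => μ[fun ω => Y ω * E ω * A ω | m] ω / p ω)
    (hm₁_meas : AEStronglyMeasurable m₁ μ) (hmY_meas : AEStronglyMeasurable mY μ)
    (hm₁_mem : ∀ᵐ ω ∂μ, m₁ ω ∈ Icc ε M) (hmY_le : ∀ᵐ ω ∂μ, |mY ω| ≤ M)
    (hp' : Measurable[m] p') (hm₁' : Measurable[m] m₁') (hmY' : Measurable[m] mY')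
    (hp'_mem : ∀ ω, p' ω ∈ Icc ε 1) (hm₁'_mem : ∀ ω, m₁' ω ∈ Icc ε M)
    (hmY'_le : ∀ ω, |mY' ω| ≤ M) :
    ∫ ω, uncenteredInfluence (A ω) (B ω) (Y ω) (E ω) (p' ω) (m₁' ω) (mY' ω) ∂μ
        - ∫ ω, (μ₀ ω * p ω + mY ω / m₁ ω * ps ω) ∂μ
      = ∫ ω, secondOrderRemainder (p ω) (p' ω) (m₁ ω) (m₁' ω) (mY ω) (mY' ω) ∂μ := by
  have hA_int : Integrable A μ := .of_bound hA 1 (ae_of_all _ hA_le)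
  rw [show B = fun ω => 1 - A ω from funext hBA] at hps ⊢
  have hps_eq : ps =ᵐ[μ] fun ω => 1 - p ω := by
    filter_upwards [hps, condExp_one_sub hm hA_int, hp] with ω h₁ h₂ h₃
    rw [h₁, h₂, h₃]
  have hp_ne : ∀ᵐ ω ∂μ, p ω ≠ 0 := hp_mem.mono fun ω h => (hε.trans_le h.1).ne'
  have hψ : Integrable (fun ω => μ₀ ω * p ω + mY ω / m₁ ω * ps ω) μ := by
    refine .add ((integrable_condExp (m := m) (f := fun ω => Y ω * A ω)).congr ?_)
      (.of_bound ?_ (M / ε * 1) ?_)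
    · filter_upwards [h₀, hp_ne] with ω h hne
      rw [h, div_mul_cancel₀ _ hne]
    · exact (hmY_meas.aemeasurable.div hm₁_meas.aemeasurable).aestronglyMeasurable.mul
        ((stronglyMeasurable_condExp.mono hm).aestronglyMeasurable.congr hps.symm)
    · filter_upwards [hm₁_mem, hmY_le, hps_eq, hp_mem] with ω hm₁ω hmYω hpsω hpω
      rw [norm_mul, norm_div, hpsω]
      refine mul_le_mul (div_le_div₀ hM hmYω hε (hm₁ω.1.trans (le_abs_self _))) ?_
        (norm_nonneg _) (by positivity)
      rw [Real.norm_eq_abs, abs_le]; constructor <;> linarith [hpω.1, hpω.2]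
  rw [← integral_condExp hm, ← integral_sub integrable_condExp hψ]
  exact integral_congr_ae <| condExp_uncenteredInfluence_sub_ae_eq_secondOrderRemainder hm hε
    (hY_int.mul_bdd hA (ae_of_all _ hA_le)) (hE_int.mul_bdd hA (ae_of_all _ hA_le))
    (hYE_int.mul_bdd hA (ae_of_all _ hA_le)) ((integrable_const 1).sub hA_int) hp_ne hps.symm
    hps_eq h₀ h₁ hY hp' hm₁' hmY' hp'_mem hm₁'_mem hmY'_le

theorem abs_integral_uncenteredInfluence_sub_le (hm : m ≤ m₀) {ε M : ℝ} (hε : 0 < ε)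
    (hM : 0 ≤ M) {A B Y E p ps μ₀ m₁ mY p' m₁' mY' : Ω → ℝ}
    (hA : AEStronglyMeasurable A μ) (hA_le : ∀ ω, |A ω| ≤ 1) (hBA : ∀ ω, B ω = 1 - A ω)
    (hY_int : Integrable Y μ) (hE_int : Integrable E μ)
    (hYE_int : Integrable (fun ω => Y ω * E ω) μ)
    (hp : p =ᵐ[μ] μ[A | m]) (hps : ps =ᵐ[μ] μ[B | m]) (hp_mem : ∀ᵐ ω ∂μ, p ω ∈ Icc ε 1)
    (h₀ : μ₀ =ᵐ[μ] fun ω => μ[fun ω => Y ω * A ω | m] ω / p ω)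
    (h₁ : m₁ =ᵐ[μ] fun ω => μ[fun ω => E ω * A ω | m] ω / p ω)
    (hY : mY =ᵐ[μ] fun ω => μ[fun ω => Y ω * E ω * A ω | m] ω / p ω)
    (hm₁_meas : AEStronglyMeasurable m₁ μ) (hmY_meas : AEStronglyMeasurable mY μ)
    (hm₁_mem : ∀ᵐ ω ∂μ, m₁ ω ∈ Icc ε M) (hmY_le : ∀ᵐ ω ∂μ, |mY ω| ≤ M)
    (hp' : Measurable[m] p') (hm₁' : Measurable[m] m₁') (hmY' : Measurable[m] mY')
    (hp'_mem : ∀ ω, p' ω ∈ Icc ε 1) (hm₁'_mem : ∀ ω, m₁' ω ∈ Icc ε M)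
    (hmY'_le : ∀ ω, |mY' ω| ≤ M) :
    |∫ ω, uncenteredInfluence (A ω) (B ω) (Y ω) (E ω) (p' ω) (m₁' ω) (mY' ω) ∂μ
        - ∫ ω, (μ₀ ω * p ω + mY ω / m₁ ω * ps ω) ∂μ|
      ≤ M / ε ^ 4 * (√(∫ ω, (m₁' ω - m₁ ω) ^ 2 ∂μ) * √(∫ ω, (mY' ω - mY ω) ^ 2 ∂μ))
        + M ^ 2 / ε ^ 4 * (√(∫ ω, (m₁' ω - m₁ ω) ^ 2 ∂μ) * √(∫ ω, (p' ω - p ω) ^ 2 ∂μ))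
        + M ^ 2 / ε ^ 4 * (√(∫ ω, (mY' ω - mY ω) ^ 2 ∂μ) * √(∫ ω, (p' ω - p ω) ^ 2 ∂μ))
        + M / ε ^ 4 * √(∫ ω, (m₁' ω - m₁ ω) ^ 2 ∂μ) ^ 2 := by
  have hΔ₁ : MemLp (m₁' - m₁) 2 μ :=
    (memLp_of_bounded (ae_of_all _ hm₁'_mem) (hm₁'.mono hm le_rfl).aestronglyMeasurable 2).sub
      (memLp_of_bounded hm₁_mem hm₁_meas 2)
  have hΔY : MemLp (mY' - mY) 2 μ :=
    (MemLp.of_bound (hmY'.mono hm le_rfl).aestronglyMeasurable M (ae_of_all _ hmY'_le)).sub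
      (MemLp.of_bound hmY_meas M hmY_le)
  have hΔp : MemLp (p' - p) 2 μ :=
    (memLp_of_bounded (ae_of_all _ hp'_mem) (hp'.mono hm le_rfl).aestronglyMeasurable 2).sub
      (memLp_of_bounded hp_mem ((stronglyMeasurable_condExp.mono hm).aestronglyMeasurable.congr
        hp.symm) 2)
  rw [integral_uncenteredInfluence_sub_eq_integral_secondOrderRemainder hm hε hM hA hA_le hBA
    hY_int hE_int hYE_int hp hps hp_mem h₀ h₁ hY hm₁_meas hmY_meas hm₁_mem hmY_le hp' hm₁' hmY'
    hp'_mem hm₁'_mem hmY'_le]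
  refine abs_integral_le_of_ae_abs_le_quadratic hΔ₁ hΔY hΔp (by positivity) (by positivity)
    (by positivity) ?_
  filter_upwards [hp_mem, hm₁_mem, hmY_le] with ω hpω hm₁ω hmYω
  exact abs_secondOrderRemainder_le hε ⟨hε.le.trans hpω.1, hpω.2⟩ (hp'_mem ω) hm₁ω
    (hm₁'_mem ω) hmYω

end ConditionalExpectation

/-- Second-order remainder bound: there exist constants `C₁, C₂, C₃, C₄`
depending only on `ε` and `M` such that
`|E[ν̃] − ψ_t(P)| ≤ C₁‖m̃₁−μ₁‖‖m̃_Y−μ_Y‖ + C₂‖m̃₁−μ₁‖‖π̃_t−π_t‖ + C₃‖m̃_Y−μ_Y‖‖π̃_t−π_t‖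
  + C₄‖m̃₁−μ₁‖²`, where `‖f‖ = (E[f(X)²])^{1/2}`. -/
theorem second_order_remainder_bound (ε M : ℝ) (hε : 0 < ε) (hεM : ε ≤ M) :
    ∃ C₁ C₂ C₃ C₄ : ℝ,
      ∀ (Ω : Type u) [MeasurableSpace Ω] (P : Measure Ω) [IsProbabilityMeasure P]
        (p : ℕ) (X : Ω → (Fin p → ℝ)) (T : Ω → ℝ) (Y : Ω → ℝ),
        Measurable X → Measurable T → Measurable Y →
        (∀ ω, T ω = 0 ∨ T ω = 1) →
        ∀ (t : ℝ), (t = 0 ∨ t = 1) →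
        ∀ (s : ℝ → ℝ), Measurable s →
        ∀ (γ : ℝ)
          (πt πs : (Fin p → ℝ) → ℝ), Measurable πt → Measurable πs →
        -- versions of the conditional treatment probabilities given `σ(X)`
        ((fun ω => πt (X ω)) =ᵐ[P]
          P[(fun ω => if T ω = t then (1 : ℝ) else 0) |
            MeasurableSpace.comap X inferInstance]) →
        ((fun ω => πs (X ω)) =ᵐ[P]
          P[(fun ω => if T ω = 1 - t then (1 : ℝ) else 0) |
            MeasurableSpace.comap X inferInstance]) →
        -- positivity
        (∀ᵐ ω ∂P, ε ≤ πt (X ω) ∧ πt (X ω) ≤ 1 - ε) →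
        -- integrability
        Integrable Y P →
        Integrable (fun ω => Real.exp (γ * s (Y ω))) P →
        Integrable (fun ω => Y ω * Real.exp (γ * s (Y ω))) P →
        -- versions of the conditional means: `muY = μ_t(Y;X)`, `muE = μ₁(X)`, `muYE = μ_Y(X)`
        ∀ (muY muE muYE : (Fin p → ℝ) → ℝ),
        Measurable muY → Measurable muE → Measurable muYE →
        ((fun ω => muY (X ω)) =ᵐ[P] fun ω =>
          (P[(fun ω => Y ω * (if T ω = t then (1 : ℝ) else 0)) |
            MeasurableSpace.comap X inferInstance]) ω / πt (X ω)) →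
        ((fun ω => muE (X ω)) =ᵐ[P] fun ω =>
          (P[(fun ω => Real.exp (γ * s (Y ω)) * (if T ω = t then (1 : ℝ) else 0)) |
            MeasurableSpace.comap X inferInstance]) ω / πt (X ω)) →
        ((fun ω => muYE (X ω)) =ᵐ[P] fun ω =>
          (P[(fun ω => Y ω * Real.exp (γ * s (Y ω)) * (if T ω = t then (1 : ℝ) else 0)) |
            MeasurableSpace.comap X inferInstance]) ω / πt (X ω)) →
        (∀ᵐ ω ∂P, ε ≤ muE (X ω) ∧ muE (X ω) ≤ M) →
        (∀ᵐ ω ∂P, |muYE (X ω)| ≤ M) →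
        -- nuisance functions
        ∀ (tπt tm1 tmY : (Fin p → ℝ) → ℝ),
        Measurable tπt → Measurable tm1 → Measurable tmY →
        (∀ x, tπt x ∈ Set.Icc ε (1 - ε)) →
        (∀ x, tm1 x ∈ Set.Icc ε M) →
        (∀ x, tmY x ∈ Set.Icc (-M) M) →
        -- the bound
        |(∫ ω, ((if T ω = t then (1 : ℝ) else 0) *
              (Y ω + Y ω * Real.exp (γ * s (Y ω)) * (1 - tπt (X ω)) / (tπt (X ω) * tm1 (X ω))
                - Real.exp (γ * s (Y ω)) * (1 - tπt (X ω)) * tmY (X ω) /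
                    (tπt (X ω) * tm1 (X ω) ^ 2))
            + (if T ω = 1 - t then (1 : ℝ) else 0) * (tmY (X ω) / tm1 (X ω))) ∂P)
          - (∫ ω, (muY (X ω) * πt (X ω) + (muYE (X ω) / muE (X ω)) * πs (X ω)) ∂P)| ≤
          C₁ * (Real.sqrt (∫ ω, (tm1 (X ω) - muE (X ω)) ^ 2 ∂P) *
                Real.sqrt (∫ ω, (tmY (X ω) - muYE (X ω)) ^ 2 ∂P)) +
          C₂ * (Real.sqrt (∫ ω, (tm1 (X ω) - muE (X ω)) ^ 2 ∂P) *
                Real.sqrt (∫ ω, (tπt (X ω) - πt (X ω)) ^ 2 ∂P)) +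
          C₃ * (Real.sqrt (∫ ω, (tmY (X ω) - muYE (X ω)) ^ 2 ∂P) *
                Real.sqrt (∫ ω, (tπt (X ω) - πt (X ω)) ^ 2 ∂P)) +
          C₄ * Real.sqrt (∫ ω, (tm1 (X ω) - muE (X ω)) ^ 2 ∂P) ^ 2 := by
  refine ⟨M / ε ^ 4, M ^ 2 / ε ^ 4, M ^ 2 / ε ^ 4, M / ε ^ 4, ?_⟩
  intro Ω _ P _ p X T Y hX hT _ hT01 t ht s _ γ πt πs _ _ hπt hπs hπt_mem hY hE hYE
    muY muE muYE _ hmuE_meas hmuYE_meas hmuY hmuE hmuYE hmuE_mem hmuYE_le tπt tm1 tmY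
    htπt htm1 htmY htπt_mem htm1_mem htmY_mem
  have hXm : Measurable[MeasurableSpace.comap X inferInstance] X := comap_measurable X
  have hA : Measurable fun ω => if T ω = t then (1 : ℝ) else 0 :=
    .ite (hT (measurableSet_singleton t)) measurable_const measurable_const
  exact abs_integral_uncenteredInfluence_sub_le hX.comap_le hε (hε.le.trans hεM)
    hA.aestronglyMeasurable (fun ω => by split_ifs <;> simp)
    (fun ω => ite_eq_one_sub_eq_one_sub_ite (hT01 ω) ht) hY hE hYE hπt hπs
    (hπt_mem.mono fun ω h => Icc_subset_Icc_right (by linarith) h) hmuY hmuE hmuYE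
    (hmuE_meas.comp hX).aestronglyMeasurable (hmuYE_meas.comp hX).aestronglyMeasurable
    hmuE_mem hmuYE_le (htπt.comp hXm) (htm1.comp hXm) (htmY.comp hXm)
    (fun ω => Icc_subset_Icc_right (by linarith) (htπt_mem _)) (fun ω => htm1_mem _)
    (fun ω => abs_le.2 (htmY_mem _))
end
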